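/- The function t ↦ exp(μ₁Nt(-1 + (1-exp(-tμ₂))/(tμ₂))) for t > 0, extended by value 1 at t = 0, is a valid survival function: it is continuous, nonincreasing, equals 1 at 0, and tends to 0 as t → ∞. -/

import Mathlib

theorem stmt_6 (μ₁ μ₂ N : ℝ) (hμ₁ : 0 < μ₁) (hμ₂ : 0 < μ₂) (hN : 0 < N)
    (G : ℝ → ℝ)
    (hG : ∀ t : ℝ, 0 < t →
      G t = Real.exp (μ₁ * N * t * (-1 + (1 - Real.exp (-(t * μ₂))) / (t * μ₂))))
    (hG0 : G 0 = 1) :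
    ContinuousOn G (Set.Ici 0) ∧ AntitoneOn G (Set.Ici 0) ∧ G 0 = 1 ∧
      Filter.Tendsto G Filter.atTop (nhds 0) := by
  have hcpos : 0 < μ₁ * N := mul_pos hμ₁ hN
  set H : ℝ → ℝ :=
    fun t => Real.exp (μ₁ * N * (-t + (1 - Real.exp (-(t * μ₂))) / μ₂)) with hH
  have hEq : Set.EqOn G H (Set.Ici 0) := by
    intro t ht
    rcases eq_or_lt_of_le (Set.mem_Ici.mp ht) with h | h
    · simp [hH, ← h, hG0]
    · rw [hG t h, hH]
      congr 1
      field_simp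
  have hHcont : Continuous H := by
    apply Real.continuous_exp.comp
    continuity
  have key : ∀ s t : ℝ, 0 ≤ s → s ≤ t →
      Real.exp (-(s * μ₂)) - Real.exp (-(t * μ₂)) ≤ (t - s) * μ₂ := by
    intro s t hs hst
    have h1 : Real.exp (-(t * μ₂)) =
        Real.exp (-(s * μ₂)) * Real.exp (-((t - s) * μ₂)) := by
      rw [← Real.exp_add]; ring_nf
    have h2 : 1 + (-((t - s) * μ₂)) ≤ Real.exp (-((t - s) * μ₂)) := by
      linarith [Real.add_one_le_exp (-((t - s) * μ₂))]
    have h3 : Real.exp (-(s * μ₂)) ≤ 1 := by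
      apply Real.exp_le_one_iff.mpr
      nlinarith
    have h4 : 0 < Real.exp (-(s * μ₂)) := Real.exp_pos _
    nlinarith [mul_nonneg (sub_nonneg.mpr hst) hμ₂.le]
  have hHanti : AntitoneOn H (Set.Ici 0) := by
    intro s hs t ht hst
    apply Real.exp_le_exp.mpr
    apply mul_le_mul_of_nonneg_left _ hcpos.le
    have hk := key s t (Set.mem_Ici.mp hs) hst
    rw [show (-t + (1 - Real.exp (-(t * μ₂))) / μ₂ : ℝ)
        = (-t * μ₂ + (1 - Real.exp (-(t * μ₂)))) / μ₂ by field_simp,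
      show (-s + (1 - Real.exp (-(s * μ₂))) / μ₂ : ℝ)
        = (-s * μ₂ + (1 - Real.exp (-(s * μ₂)))) / μ₂ by field_simp,
      div_le_div_iff_of_pos_right hμ₂]
    linarith
  have hHtend : Filter.Tendsto H Filter.atTop (nhds 0) := by
    apply Real.tendsto_exp_atBot.comp
    apply Filter.Tendsto.const_mul_atBot hcpos
    apply Filter.tendsto_atBot_mono (g := fun t : ℝ =>
      -t + (1 - Real.exp (-(t * μ₂))) / μ₂) (f := fun t : ℝ => -t + 1 / μ₂)
    · intro t
      have : 0 < Real.exp (-(t * μ₂)) := Real.exp_pos _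
      have : (1 - Real.exp (-(t * μ₂))) / μ₂ ≤ 1 / μ₂ := by
        rw [div_le_div_iff_of_pos_right hμ₂]
        linarith
      linarith
    · apply Filter.tendsto_atBot_add_const_right
      exact Filter.tendsto_neg_atTop_atBot
  refine ⟨hHcont.continuousOn.congr hEq, ?_, hG0, ?_⟩
  · intro s hs t ht hst
    rw [hEq hs, hEq ht]
    exact hHanti hs ht hst
  · apply hHtend.congr'
    filter_upwards [Filter.eventually_ge_atTop (0 : ℝ)] with t ht
    exact (hEq ht).symm
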